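/- arXiv:2003.04225 — 2 statements merged into one kernel-verified Lean document; each statement's English description precedes it below -/
import Mathlib

section
/- Let φ be a tautology-free CNF propositional formula over a set of atoms A and let μ be a partial truth assignment on A. Then μ validates φ if and only if μ entails φ. -/
/-- Propositional formulas over a set of atoms `α`, built from the constants
`⊤`/`⊥`, atoms, negation, conjunction and disjunction
(implication and bi-implication being the standard abbreviations). -/
inductive PropForm (α : Type) : Type
  | tr : PropForm α
  | fls : PropForm α
  | atom : α → PropForm α
  | neg : PropForm α → PropForm α
  | conj : PropForm α → PropForm α → PropForm α
  | disj : PropForm α → PropForm α → PropForm α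

namespace PropForm

variable {α β : Type}

/-- Standard two-valued semantics under a total truth assignment. -/
def eval (η : α → Bool) : PropForm α → Bool
  | tr => true
  | fls => false
  | atom a => η a
  | neg φ => !(eval η φ)
  | conj φ ψ => eval η φ && eval η ψ
  | disj φ ψ => eval η φ || eval η ψ

/-- Three-valued (Kleene) evaluation under a partial truth assignment
(`none` = unknown). -/
def eval3 (μ : α → Option Bool) : PropForm α → Option Bool
  | tr => some true
  | fls => some false
  | atom a => μ a
  | neg φ => Option.map not (eval3 μ φ)
  | conj φ ψ =>
      match eval3 μ φ, eval3 μ ψ with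
      | some false, _ => some false
      | _, some false => some false
      | some true, some true => some true
      | _, _ => none
  | disj φ ψ =>
      match eval3 μ φ, eval3 μ ψ with
      | some true, _ => some true
      | _, some true => some true
      | some false, some false => some false
      | _, _ => none

/-- Simplifying negation: `¬⊤ ⇒ ⊥`, `¬⊥ ⇒ ⊤`. -/
def mkNeg : PropForm α → PropForm α
  | tr => fls
  | fls => tr
  | φ => neg φ

/-- Simplifying conjunction: `⊤∧φ ⇒ φ`, `⊥∧φ ⇒ ⊥`, `φ∧⊤ ⇒ φ`, `φ∧⊥ ⇒ ⊥`. -/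
def mkConj : PropForm α → PropForm α → PropForm α
  | tr, ψ => ψ
  | fls, _ => fls
  | φ, tr => φ
  | _, fls => fls
  | φ, ψ => conj φ ψ

/-- Simplifying disjunction: `⊤∨φ ⇒ ⊤`, `⊥∨φ ⇒ φ`, `φ∨⊤ ⇒ ⊤`, `φ∨⊥ ⇒ φ`. -/
def mkDisj : PropForm α → PropForm α → PropForm α
  | tr, _ => tr
  | fls, ψ => ψ
  | _, tr => tr
  | φ, fls => φ
  | φ, ψ => disj φ ψ

/-- The residual `φ|_μ` of `φ` under a partial assignment `μ`: substitute every
assigned atom with the constant `⊤`/`⊥` given by `μ` and recursively apply the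
standard truth-value propagation rules. -/
def residual (μ : α → Option Bool) : PropForm α → PropForm α
  | tr => tr
  | fls => fls
  | atom a =>
      match μ a with
      | some true => tr
      | some false => fls
      | none => atom a
  | neg φ => mkNeg (residual μ φ)
  | conj φ ψ => mkConj (residual μ φ) (residual μ ψ)
  | disj φ ψ => mkDisj (residual μ φ) (residual μ ψ)

/-- The total assignment `η` extends the partial assignment `μ`. -/
def Extends (μ : α → Option Bool) (η : α → Bool) : Prop :=
  ∀ a b, μ a = some b → η a = b

/-- View a total assignment as a partial one. -/
def totalize (η : α → Bool) : α → Option Bool := fun a => some (η a)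

/-- The partial assignment `μ` *entails* `φ` (`μ ⊨ φ`): every total
assignment extending `μ` satisfies `φ`. -/
def Entails (μ : α → Option Bool) (φ : PropForm α) : Prop :=
  ∀ η : α → Bool, Extends μ η → eval η φ = true

/-- The partial assignment `μ` *validates* `φ` (`μ ⊢ φ`): the residual
`φ|_μ` is syntactically `⊤`. -/
def Validates (μ : α → Option Bool) (φ : PropForm α) : Prop :=
  residual μ φ = tr

/-- `φ` is valid: every total assignment satisfies it. -/
def Valid (φ : PropForm α) : Prop :=
  ∀ η : α → Bool, eval η φ = true

/-- Big disjunction `⋁` of a list of formulas. -/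
def bigDisj : List (PropForm α) → PropForm α
  | [] => fls
  | [φ] => φ
  | φ :: rest => disj φ (bigDisj rest)

/-- Big conjunction `⋀` of a list of formulas. -/
def bigConj : List (PropForm α) → PropForm α
  | [] => tr
  | [φ] => φ
  | φ :: rest => conj φ (bigConj rest)

/-- The cube `⋀μ` of a partial assignment `μ`: the conjunction of the literals
`A` with `μ A = true` and `¬A` with `μ A = false`. -/
noncomputable def cubeOf [Fintype α] (μ : α → Option Bool) : PropForm α :=
  bigConj ((Finset.univ : Finset α).toList.filterMap fun a =>
    match μ a with
    | some true => some (atom a)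
    | some false => some (neg (atom a))
    | none => none)

/-- `φ` is a literal: an atom or the negation of an atom. -/
def IsLit : PropForm α → Prop
  | atom _ => True
  | neg (atom _) => True
  | _ => False

/-- `φ` is a clause: a disjunction of literals. -/
inductive IsClause : PropForm α → Prop
  | lit {φ : PropForm α} : IsLit φ → IsClause φ
  | disj {φ ψ : PropForm α} : IsClause φ → IsClause ψ → IsClause (PropForm.disj φ ψ)

/-- `φ` is a cube: a conjunction of literals. -/
inductive IsCube : PropForm α → Prop
  | lit {φ : PropForm α} : IsLit φ → IsCube φ
  | conj {φ ψ : PropForm α} : IsCube φ → IsCube ψ → IsCube (PropForm.conj φ ψ)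

/-- `φ` is in CNF: a conjunction of clauses. -/
inductive IsCNF : PropForm α → Prop
  | clause {φ : PropForm α} : IsClause φ → IsCNF φ
  | conj {φ ψ : PropForm α} : IsCNF φ → IsCNF ψ → IsCNF (PropForm.conj φ ψ)

/-- The clauses of a CNF formula. -/
def clauses : PropForm α → List (PropForm α)
  | conj φ ψ => clauses φ ++ clauses ψ
  | φ => [φ]

/-- The (signed) literals of a clause: `(true, a)` for the positive literal `a`,
`(false, a)` for the negative literal `¬a`. -/
def lits : PropForm α → List (Bool × α)
  | atom a => [(true, a)]
  | neg (atom a) => [(false, a)]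
  | disj φ ψ => lits φ ++ lits ψ
  | _ => []

/-- A CNF formula is tautology-free iff no clause of it contains both an atom
and its negation. -/
def TautologyFree (φ : PropForm α) : Prop :=
  ∀ c ∈ clauses φ, ¬ ∃ a, (true, a) ∈ lits c ∧ (false, a) ∈ lits c

/-- The atoms occurring in a formula. -/
def atoms : PropForm α → List α
  | tr => []
  | fls => []
  | atom a => [a]
  | neg φ => atoms φ
  | conj φ ψ => atoms φ ++ atoms ψ
  | disj φ ψ => atoms φ ++ atoms ψ

/-- Residual of a formula over `α ⊕ β` under a total assignment on the
`β`-atoms: the resulting formula is over `α`. -/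
def residualB (δ : β → Bool) : PropForm (α ⊕ β) → PropForm α
  | tr => tr
  | fls => fls
  | atom (Sum.inl a) => atom a
  | atom (Sum.inr b) => if δ b then tr else fls
  | neg φ => mkNeg (residualB δ φ)
  | conj φ ψ => mkConj (residualB δ φ) (residualB δ ψ)
  | disj φ ψ => mkDisj (residualB δ φ) (residualB δ ψ)

/-- The Shannon expansion `∃[ψ]_B` of `∃B.ψ`: the disjunction, over all total
truth assignments `δ` on the `β`-atoms, of the residuals `ψ|_δ`. -/
noncomputable def shannon [Fintype β] [DecidableEq β] (ψ : PropForm (α ⊕ β)) : PropForm α :=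
  bigDisj ((Finset.univ : Finset (β → Bool)).toList.map fun δ => residualB δ ψ)

/-- The combined partial assignment `μ∪δ` on `α ⊕ β` of a partial assignment
`μ` on `α` and a total assignment `δ` on `β`. -/
def combine (μ : α → Option Bool) (δ : β → Bool) : α ⊕ β → Option Bool :=
  Sum.elim μ (fun b => some (δ b))

end PropForm

open PropForm


/-!
Validation implies entailment for every formula, because the residual `φ|_μ` has the same value
as `φ` under every total extension of `μ`. Conversely, both notions split over conjunctions, so it
suffices to treat one clause. If `μ` makes none of its literals true, set every unassigned atom
against its occurrence in the clause; since no atom occurs with both signs this is consistent,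
and the resulting extension of `μ` falsifies the clause.
-/

namespace PropForm

variable {α : Type} {μ : α → Option Bool} {η : α → Bool} {φ ψ : PropForm α}

@[simp]
theorem eval_mkNeg : eval η (mkNeg φ) = !eval η φ := by
  cases φ <;> simp [mkNeg, eval]

@[simp]
theorem eval_mkConj : eval η (mkConj φ ψ) = (eval η φ && eval η ψ) := by
  cases φ <;> cases ψ <;> simp [mkConj, eval]

@[simp]
theorem eval_mkDisj : eval η (mkDisj φ ψ) = (eval η φ || eval η ψ) := by
  cases φ <;> cases ψ <;> simp [mkDisj, eval]

theorem mkConj_eq_tr : mkConj φ ψ = tr ↔ φ = tr ∧ ψ = tr := by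
  cases φ <;> cases ψ <;> simp [mkConj]

theorem mkDisj_eq_tr : mkDisj φ ψ = tr ↔ φ = tr ∨ ψ = tr := by
  cases φ <;> cases ψ <;> simp [mkDisj]

theorem eval_residual_of_extends (h : Extends μ η) (φ : PropForm α) :
    eval η (residual μ φ) = eval η φ := by
  induction φ with
  | atom a =>
    rcases hμ : μ a with _ | b
    · simp [residual, hμ]
    · cases b <;> simp [residual, hμ, eval, h a _ hμ]
  | _ => simp_all [residual, eval]

theorem Validates.entails (h : Validates μ φ) : Entails μ φ := fun η hη => by
  rw [← eval_residual_of_extends hη, show residual μ φ = tr from h, eval]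

theorem validates_conj_iff : Validates μ (conj φ ψ) ↔ Validates μ φ ∧ Validates μ ψ :=
  mkConj_eq_tr

theorem entails_conj_iff : Entails μ (conj φ ψ) ↔ Entails μ φ ∧ Entails μ ψ := by
  simp only [Entails, eval, Bool.and_eq_true, imp_and, forall_and]

theorem tautologyFree_conj_iff :
    TautologyFree (conj φ ψ) ↔ TautologyFree φ ∧ TautologyFree ψ := by
  simp only [TautologyFree, clauses, List.mem_append, or_imp, forall_and]

theorem IsLit.eq_atom_or_eq_neg_atom (h : IsLit φ) :
    (∃ a, φ = atom a) ∨ ∃ a, φ = neg (atom a) := by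
  rcases φ with _ | _ | a | (_ | _ | a | _ | _ | _) | _ | _ <;> simp_all [IsLit]

theorem IsLit.residual_eq_tr_iff (h : IsLit φ) :
    residual μ φ = tr ↔ ∃ p ∈ lits φ, μ p.2 = some p.1 := by
  rcases h.eq_atom_or_eq_neg_atom with ⟨a, rfl⟩ | ⟨a, rfl⟩ <;>
    rcases hμ : μ a with _ | _ | _ <;> simp [residual, lits, mkNeg, hμ]

theorem IsLit.eval_eq_true_iff (h : IsLit φ) :
    eval η φ = true ↔ ∃ p ∈ lits φ, η p.2 = p.1 := by
  rcases h.eq_atom_or_eq_neg_atom with ⟨a, rfl⟩ | ⟨a, rfl⟩ <;> simp [eval, lits]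

theorem IsClause.clauses_eq (h : IsClause φ) : clauses φ = [φ] := by
  cases h with
  | lit h => rcases h.eq_atom_or_eq_neg_atom with ⟨a, rfl⟩ | ⟨a, rfl⟩ <;> rfl
  | disj => rfl

theorem IsClause.residual_eq_tr_iff (h : IsClause φ) :
    residual μ φ = tr ↔ ∃ p ∈ lits φ, μ p.2 = some p.1 := by
  induction h with
  | lit h => exact h.residual_eq_tr_iff
  | disj _ _ ih₁ ih₂ =>
    simp only [residual, mkDisj_eq_tr, ih₁, ih₂, lits, List.mem_append, or_and_right, exists_or]

theorem IsClause.eval_eq_true_iff (h : IsClause φ) :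
    eval η φ = true ↔ ∃ p ∈ lits φ, η p.2 = p.1 := by
  induction h with
  | lit h => exact h.eval_eq_true_iff
  | disj _ _ ih₁ ih₂ =>
    simp only [eval, Bool.or_eq_true, ih₁, ih₂, lits, List.mem_append, or_and_right, exists_or]

theorem IsClause.exists_extends_eval_eq_false (h : IsClause φ)
    (hTF : ¬∃ a, (true, a) ∈ lits φ ∧ (false, a) ∈ lits φ)
    (hμ : ∀ p ∈ lits φ, μ p.2 ≠ some p.1) :
    ∃ η, Extends μ η ∧ eval η φ = false := by
  classical
  refine ⟨fun a => (μ a).getD !decide ((true, a) ∈ lits φ), fun a b hab => by simp [hab], ?_⟩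
  rw [← Bool.not_eq_true, h.eval_eq_true_iff]
  rintro ⟨⟨s, a⟩, hp, hs⟩
  rcases ha : μ a with _ | b
  · cases s <;> simp_all
  · simp only [ha, Option.getD_some] at hs
    exact hμ _ hp (ha.trans (congrArg some hs))

theorem IsClause.validates_of_entails (h : IsClause φ)
    (hTF : ¬∃ a, (true, a) ∈ lits φ ∧ (false, a) ∈ lits φ) (hE : Entails μ φ) :
    Validates μ φ := by
  by_contra hV
  have hμ : ∀ p ∈ lits φ, μ p.2 ≠ some p.1 := by
    simpa [Validates, h.residual_eq_tr_iff] using hV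
  obtain ⟨η, hη, hfalse⟩ := h.exists_extends_eval_eq_false hTF hμ
  simp [hE η hη] at hfalse

theorem IsCNF.validates_of_entails (h : IsCNF φ) (hTF : TautologyFree φ) (hE : Entails μ φ) :
    Validates μ φ := by
  induction h with
  | clause hc => exact hc.validates_of_entails (hTF _ (by simp [hc.clauses_eq])) hE
  | conj _ _ ih₁ ih₂ =>
    rw [tautologyFree_conj_iff] at hTF
    rw [entails_conj_iff] at hE
    exact validates_conj_iff.2 ⟨ih₁ hTF.1 hE.1, ih₂ hTF.2 hE.2⟩

end PropForm

/-- For a tautology-free CNF formula `φ`, a partial assignment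
`μ` validates `φ` iff `μ` entails `φ`. -/
theorem validates_iff_entails_of_tautFree_CNF {α : Type}
    (φ : PropForm α) (hCNF : IsCNF φ) (hTF : TautologyFree φ)
    (μ : α → Option Bool) :
    Validates μ φ ↔ Entails μ φ :=
  ⟨Validates.entails, hCNF.validates_of_entails hTF⟩
end

section
/- Tseitin CNF-ization can lose entailment information: for φ = (A₁ ∧ A₂) ∨ (A₁ ∧ ¬A₂) over A = {A₁, A₂}, its Tseitin CNF-ization ψ = (B₁ ∨ B₂) ∧ (¬B₁ ∨ A₁) ∧ (¬B₁ ∨ A₂) ∧ (B₁ ∨ ¬A₁ ∨ ¬A₂) ∧ (¬B₂ ∨ A₁) ∧ (¬B₂ ∨ ¬A₂) ∧ (B₂ ∨ ¬A₁ ∨ A₂) over A ∪ {B₁, B₂}, and μ = {A₁ ↦ true}: μ entails φ, yet there is no total truth assignment δ on {B₁, B₂} such that μ∪δ entails ψ. -/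
open PropForm

/-- `φ = (A₁ ∧ A₂) ∨ (A₁ ∧ ¬A₂)` over `A = {A₁,A₂}`. -/
def phi16 : PropForm (Fin 2) :=
  PropForm.disj
    (PropForm.conj (PropForm.atom 0) (PropForm.atom 1))
    (PropForm.conj (PropForm.atom 0) (PropForm.neg (PropForm.atom 1)))

/-- The Tseitin CNF-ization `ψ = (B₁ ∨ B₂) ∧ (¬B₁ ∨ A₁) ∧ (¬B₁ ∨ A₂) ∧
(B₁ ∨ ¬A₁ ∨ ¬A₂) ∧ (¬B₂ ∨ A₁) ∧ (¬B₂ ∨ ¬A₂) ∧ (B₂ ∨ ¬A₁ ∨ A₂)` over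
`A ∪ {B₁,B₂}` (`A_i = Sum.inl`, `B_j = Sum.inr`). -/
def psi16 : PropForm (Fin 2 ⊕ Fin 2) :=
  PropForm.conj
    (PropForm.disj (PropForm.atom (Sum.inr 0)) (PropForm.atom (Sum.inr 1)))
    (PropForm.conj
      (PropForm.disj (PropForm.neg (PropForm.atom (Sum.inr 0))) (PropForm.atom (Sum.inl 0)))
      (PropForm.conj
        (PropForm.disj (PropForm.neg (PropForm.atom (Sum.inr 0))) (PropForm.atom (Sum.inl 1)))
        (PropForm.conj
          (PropForm.disj (PropForm.atom (Sum.inr 0))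
            (PropForm.disj (PropForm.neg (PropForm.atom (Sum.inl 0)))
              (PropForm.neg (PropForm.atom (Sum.inl 1)))))
          (PropForm.conj
            (PropForm.disj (PropForm.neg (PropForm.atom (Sum.inr 1))) (PropForm.atom (Sum.inl 0)))
            (PropForm.conj
              (PropForm.disj (PropForm.neg (PropForm.atom (Sum.inr 1)))
                (PropForm.neg (PropForm.atom (Sum.inl 1))))
              (PropForm.disj (PropForm.atom (Sum.inr 1))
                (PropForm.disj (PropForm.neg (PropForm.atom (Sum.inl 0)))
                  (PropForm.atom (Sum.inl 1)))))))))

namespace PropForm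

variable {α β : Type}

theorem Extends.combine {μ : α → Option Bool} {η : α → Bool} (δ : β → Bool)
    (h : Extends μ η) : Extends (combine μ δ) (Sum.elim η δ) := by
  rintro (a | b) v hv
  exacts [h a v hv, Option.some_injective _ hv]

end PropForm

theorem extends_onlyFirstTrue_iff {η : Fin 2 → Bool} :
    Extends (fun i : Fin 2 => if i = 0 then some true else none) η ↔ η 0 = true := by
  refine ⟨fun h => h 0 true rfl, fun h i v hv => ?_⟩
  fin_cases i
  · simpa [← Option.some_inj.mp hv] using h
  · simp at hv

theorem eval_phi16 (η : Fin 2 → Bool) : eval η phi16 = η 0 := by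
  simp only [phi16, eval]
  cases η 0 <;> cases η 1 <;> rfl

/-- The first three clauses of `ψ` are the Tseitin definition `B₁ ↔ A₁ ∧ A₂`. -/
theorem eval_inr_zero_of_eval_psi16 {η : Fin 2 ⊕ Fin 2 → Bool} (h : eval η psi16 = true) :
    η (Sum.inr 0) = (η (Sum.inl 0) && η (Sum.inl 1)) := by
  simp only [psi16, eval, Bool.and_eq_true, Bool.or_eq_true, Bool.not_eq_true'] at h
  cases hB : η (Sum.inr 0) <;> cases hA₁ : η (Sum.inl 0) <;> cases hA₂ : η (Sum.inl 1) <;>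
    simp_all

/-- Tseitin CNF-ization can lose entailment information:
`μ = {A₁ ↦ true}` entails `φ`, yet no total assignment `δ` on `{B₁,B₂}` makes
`μ∪δ` entail `ψ`. -/
theorem tseitin_loses_entailment :
    Entails (fun i : Fin 2 => if i = 0 then some true else none) phi16 ∧
    ¬ ∃ δ : Fin 2 → Bool,
        Entails (combine (fun i : Fin 2 => if i = 0 then some true else none) δ) psi16 := by
  refine ⟨fun η hη => (eval_phi16 η).trans (extends_onlyFirstTrue_iff.mp hη), ?_⟩
  rintro ⟨δ, hδ⟩
  -- Under `μ`, a model of `ψ` has `B₁ = A₂`; `δ` fixes `B₁` but `μ` leaves `A₂` open, so set `A₂ := ¬B₁`.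
  have hψ := hδ (Sum.elim ![true, !δ 0] δ) (.combine δ (extends_onlyFirstTrue_iff.mpr rfl))
  simpa using eval_inr_zero_of_eval_psi16 hψ
end
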